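/- arXiv:math/0105234 — 3 statements merged into one kernel-verified Lean document; each statement's English description precedes it below -/
import Mathlib

section
/- Let d ≥ 2, let κ_1, …, κ_{d−1} be integers with κ_k ≠ 0 for some k, let K and q be positive integers with q ≥ K, and let r = (r_1, …, r_{d−1}) ∈ ℤ^{d−1} be such that every nonzero m = (m_1, …, m_{d−1}) ∈ ℤ^{d−1} with m_1 r_1 + ⋯ + m_{d−1} r_{d−1} = 0 satisfies max_i |m_i| ≥ 2Kq · max_i |κ_i|. Set r_d = q(κ_1 r_1 + ⋯ + κ_{d−1} r_{d−1}). Then every nonzero n = (n_1, …, n_d) ∈ ℤ^d with n_1 r_1 + ⋯ + n_{d−1} r_{d−1} + n_d r_d = 0 satisfies max_i |n_i| ≥ K. -/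
/-- The arithmetic lemma from the proof of Corollary 3.2.  Let `κ_1, …, κ_d` be integers
(`d + 1 ≥ 2` variables), not all zero, let `K ≤ q` be positive integers, and let
`r ∈ ℤᵈ` be such that every nonzero `m ∈ ℤᵈ` orthogonal to `r` satisfies
`max_i |m_i| ≥ 2Kq·max_i |κ_i|`.  Then, setting `r_{d+1} = q(κ_1 r_1 + ⋯ + κ_d r_d)`,
every nonzero `n ∈ ℤ^{d+1}` orthogonal to `(r, r_{d+1})` satisfies `max_i |n_i| ≥ K`. -/
theorem augmented_vector_bound {d : ℕ} (κ : Fin d → ℤ) (hκ : ∃ k, κ k ≠ 0)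
    (K q : ℕ) (hK : 0 < K) (hq : K ≤ q) (r : Fin d → ℤ)
    (hr : ∀ m : Fin d → ℤ, m ≠ 0 → ∑ i, m i * r i = 0 →
      ∃ i, ∀ j, 2 * (K : ℤ) * (q : ℤ) * |κ j| ≤ |m i|) :
    ∀ n : Fin (d+1) → ℤ, n ≠ 0 →
      ∑ i, n i * (Fin.snoc r ((q : ℤ) * ∑ j, κ j * r j) : Fin (d+1) → ℤ) i = 0 →
      ∃ i, (K : ℤ) ≤ |n i| := by
  intro n hn hsum
  obtain ⟨k, hk⟩ := hκ
  have hκk : (1 : ℤ) ≤ |κ k| := by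
    rcases lt_or_ge 0 (κ k) with h | h
    · rw [abs_of_pos h]; omega
    · rw [abs_of_nonpos h]; omega
  have hK1 : (1 : ℤ) ≤ (K : ℤ) := by exact_mod_cast hK
  have hqK : (K : ℤ) ≤ (q : ℤ) := by exact_mod_cast hq
  have hKqprod : (K : ℤ) ≤ (K : ℤ) * (q : ℤ) := by nlinarith
  set nd := n (Fin.last d) with hnd
  set m : Fin d → ℤ := fun i => n i.castSucc + (q : ℤ) * nd * κ i with hm
  have hsum' : ∑ i, n i.castSucc * r i + nd * ((q : ℤ) * ∑ j, κ j * r j) = 0 := by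
    rw [Fin.sum_univ_castSucc] at hsum
    simpa using hsum
  have hms : ∑ i, m i * r i = 0 := by
    have : ∑ i, m i * r i
        = ∑ i, n i.castSucc * r i + (q : ℤ) * nd * ∑ i, κ i * r i := by
      rw [Finset.mul_sum, ← Finset.sum_add_distrib]
      refine Finset.sum_congr rfl fun i _ => by ring
    rw [this]
    linarith [hsum']
  by_cases hm0 : m = 0
  · have hmi : ∀ i : Fin d, n i.castSucc = -((q : ℤ) * nd * κ i) := by
      intro i
      have := congrFun hm0 i
      simp [hm] at this
      linarith
    have hndne : nd ≠ 0 := by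
      intro h0
      apply hn
      funext i
      refine Fin.lastCases ?_ ?_ i
      · simpa using h0
      · intro j; simp [hmi j, h0]
    have hnd1 : (1 : ℤ) ≤ |nd| := by
      rcases lt_or_ge 0 nd with h | h
      · rw [abs_of_pos h]; omega
      · rw [abs_of_nonpos h]; omega
    refine ⟨k.castSucc, ?_⟩
    rw [hmi k, abs_neg, abs_mul, abs_mul]
    have hq' : (0:ℤ) < (q:ℤ) := by omega
    rw [abs_of_pos hq']
    calc (K : ℤ) ≤ (q : ℤ) := hqK
      _ = (q : ℤ) * 1 * 1 := by ring
      _ ≤ (q : ℤ) * |nd| * |κ k| := by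
          apply mul_le_mul
          · exact mul_le_mul_of_nonneg_left hnd1 (le_of_lt hq')
          · exact hκk
          · norm_num
          · positivity
  · obtain ⟨i, hi⟩ := hr m hm0 hms
    by_cases hndK : (K : ℤ) ≤ |nd|
    · exact ⟨Fin.last d, hndK⟩
    · push_neg at hndK
      refine ⟨i.castSucc, ?_⟩
      have hni : n i.castSucc = m i - (q : ℤ) * nd * κ i := by simp [hm]
      have habs : |m i| - |(q : ℤ) * nd * κ i| ≤ |n i.castSucc| := by
        rw [hni]; exact abs_sub_abs_le_abs_sub _ _
      have hmil := hi i
      have hmik := hi k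
      have hqnd : |(q : ℤ) * nd * κ i| = (q : ℤ) * |nd| * |κ i| := by
        rw [abs_mul, abs_mul, abs_of_nonneg (by positivity : (0:ℤ) ≤ (q:ℤ))]
      by_cases hκi : κ i = 0
      · have hmn : m i = n i.castSucc := by simp [hm, hκi]
        rw [← hmn]
        have h2 : 2*(K:ℤ)*(q:ℤ)*1 ≤ 2*(K:ℤ)*(q:ℤ)*|κ k| :=
          mul_le_mul_of_nonneg_left hκk (by positivity)
        linarith
      · have hκi1 : (1 : ℤ) ≤ |κ i| := by
          rcases lt_or_ge 0 (κ i) with h | h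
          · rw [abs_of_pos h]; omega
          · rw [abs_of_nonpos h]; omega
        have hnd0 : (0:ℤ) ≤ |nd| := abs_nonneg nd
        have h3 : (q:ℤ) * |nd| * |κ i| ≤ (q:ℤ) * ((K:ℤ) - 1) * |κ i| := by
          apply mul_le_mul_of_nonneg_right _ (abs_nonneg _)
          apply mul_le_mul_of_nonneg_left _ (by positivity : (0:ℤ) ≤ (q:ℤ))
          linarith
        have h4 : (K:ℤ)*(q:ℤ)*1 ≤ (K:ℤ)*(q:ℤ)*|κ i| :=
          mul_le_mul_of_nonneg_left hκi1 (by positivity)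
        have h5 : (0:ℤ) ≤ (q:ℤ)*|κ i| := by positivity
        nlinarith [habs, hqnd, hmil, h3, h4, h5, hKqprod]
end

section
/- The Mahler measure of the four-variable polynomial u_1 − u_1u_3 − u_1u_4 − u_2u_3 + u_3u_4 + u_1u_2u_3 equals the Mahler measure of the four-variable Laurent polynomial 1 + v_1 + v_2 + v_3 + v_4 − v_1^{-1}v_2^{-1}v_3v_4. -/
open MeasureTheory

/-- Evaluation of an integer Laurent polynomial in `d` variables at a point of `ℂᵈ`. -/
noncomputable def lEval {d : ℕ} (f : AddMonoidAlgebra ℤ (Fin d → ℤ)) (s : Fin d → ℂ) : ℂ :=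
  Finsupp.sum f.coeff fun n c => (c : ℂ) * ∏ i, s i ^ (n i)

open Classical in
/-- The Mahler measure of an integer Laurent polynomial in `d` variables:
the exponential of the average of `log |f|` over the `d`-torus; by convention `M(0) = 0`. -/
noncomputable def mahlerMeasure {d : ℕ} (f : AddMonoidAlgebra ℤ (Fin d → ℤ)) : ℝ :=
  if f = 0 then 0 else
    Real.exp (∫ t in Set.pi Set.univ (fun _ : Fin d => Set.Icc (0:ℝ) 1),
      Real.log ‖lEval f (fun i => Complex.exp (2 * (Real.pi : ℂ) * Complex.I * (t i : ℂ)))‖)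

/-- The variable `u_i`, as a Laurent polynomial. -/
noncomputable def U {d : ℕ} (i : Fin d) : AddMonoidAlgebra ℤ (Fin d → ℤ) :=
  AddMonoidAlgebra.single (Pi.single i (1:ℤ)) 1

/-- The inverse variable `u_i⁻¹`, as a Laurent polynomial. -/
noncomputable def Uinv {d : ℕ} (i : Fin d) : AddMonoidAlgebra ℤ (Fin d → ℤ) :=
  AddMonoidAlgebra.single (Pi.single i (-1:ℤ)) 1

/-!
Call the two polynomials `f` and `g`, and on the torus write `u_j = 𝐞(t_j)`. The substitution
`v₁ = -u₃, v₂ = -u₄, v₃ = u₂u₃, v₄ = u₁⁻¹u₃u₄` gives `f(u) = u₁ · g(v)`, and `|u₁| = 1`, so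
`|f(u)| = |g(v)|`. In angle coordinates the substitution is the affine map `t ↦ c + A t` with
`A ∈ GL₄(ℤ)` and `c = (1/2, 1/2, 0, 0)`. Such a map preserves Lebesgue measure and sends the unit
cube onto another fundamental domain of `ℤ⁴`, so it does not change the integral over the cube of
the `ℤ⁴`-periodic function `log |g(𝐞(t))|`.
-/

open Set Submodule Matrix
open scoped FourierTransform

section Evaluation

variable {d : ℕ}

theorem lEval_U (i : Fin d) (s : Fin d → ℂ) : lEval (U i) s = s i := by
  simp [lEval, U, Pi.single_apply]

theorem lEval_Uinv (i : Fin d) (s : Fin d → ℂ) : lEval (Uinv i) s = (s i)⁻¹ := by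
  simp [lEval, Uinv, Pi.single_apply]

theorem ne_zero_of_lEval_ne_zero {f : AddMonoidAlgebra ℤ (Fin d → ℤ)} {s : Fin d → ℂ}
    (h : lEval f s ≠ 0) : f ≠ 0 := by
  rintro rfl
  simp [lEval] at h

noncomputable def lEvalHom (s : Fin d → ℂ) (hs : ∀ i, s i ≠ 0) :
    AddMonoidAlgebra ℤ (Fin d → ℤ) →ₐ[ℤ] ℂ :=
  AddMonoidAlgebra.lift ℤ ℂ (Fin d → ℤ)
    { toFun := fun n => ∏ i, s i ^ n.toAdd i
      map_one' := by simp
      map_mul' := fun n m => by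
        simp only [toAdd_mul, Pi.add_apply, zpow_add₀ (hs _), Finset.prod_mul_distrib] }

theorem lEvalHom_apply (s : Fin d → ℂ) (hs : ∀ i, s i ≠ 0) (f : AddMonoidAlgebra ℤ (Fin d → ℤ)) :
    lEvalHom s hs f = lEval f s := by
  simp [lEvalHom, AddMonoidAlgebra.lift_apply, lEval]

end Evaluation

theorem Real.coe_fourierChar (t : ℝ) :
    (𝐞 t : ℂ) = Complex.exp (2 * (Real.pi : ℂ) * Complex.I * (t : ℂ)) := by
  rw [Real.fourierChar_apply]; push_cast; ring_nf

theorem Real.fourierChar_intCast (n : ℤ) : 𝐞 n = 1 := by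
  rw [Real.fourierChar_apply', Circle.exp_two_pi_mul_int]

theorem Real.fourierChar_inv_two : (𝐞 2⁻¹ : ℂ) = -1 := by
  rw [Real.fourierChar_apply, ← Complex.exp_pi_mul_I]; push_cast; ring_nf

section IntegerLattice

variable {ι : Type*} [Fintype ι]

theorem mem_span_basisFun_iff {x : ι → ℝ} :
    x ∈ span ℤ (range (Pi.basisFun ℝ ι)) ↔ ∃ n : ι → ℤ, Int.cast ∘ n = x := by
  simp only [Module.Basis.mem_span_iff_repr_mem, Pi.basisFun_repr, mem_range, algebraMap_int_eq,
    eq_intCast, Classical.skolem, funext_iff, Function.comp_apply]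

theorem mulVec_mem_span_basisFun (M : Matrix ι ι ℤ) {x : ι → ℝ}
    (hx : x ∈ span ℤ (range (Pi.basisFun ℝ ι))) :
    M.map (↑) *ᵥ x ∈ span ℤ (range (Pi.basisFun ℝ ι)) := by
  obtain ⟨n, rfl⟩ := mem_span_basisFun_iff.1 hx
  exact mem_span_basisFun_iff.2 ⟨M *ᵥ n, funext (RingHom.map_mulVec (Int.castRingHom ℝ) M n)⟩

variable [DecidableEq ι]

/-- `x ↦ u x` on `ℝ^ι`, for `u ∈ GL_ι(ℤ)`. -/
noncomputable def unitsIntToLinearEquiv (u : (Matrix ι ι ℤ)ˣ) : (ι → ℝ) ≃ₗ[ℝ] ι → ℝ :=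
  let v := Units.map ((Int.castRingHom ℝ).mapMatrix : Matrix ι ι ℤ →+* Matrix ι ι ℝ).toMonoidHom u
  Matrix.toLin'OfInv v.inv_mul v.mul_inv

theorem span_basisFun_map_unitsIntToLinearEquiv (u : (Matrix ι ι ℤ)ˣ) :
    span ℤ (range ((Pi.basisFun ℝ ι).map (unitsIntToLinearEquiv u))) =
      span ℤ (range (Pi.basisFun ℝ ι)) := by
  ext x
  calc x ∈ span ℤ (range ((Pi.basisFun ℝ ι).map (unitsIntToLinearEquiv u)))
      ↔ (↑u⁻¹ : Matrix ι ι ℤ).map (↑) *ᵥ x ∈ span ℤ (range (Pi.basisFun ℝ ι)) := by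
        rw [Module.Basis.mem_span_iff_repr_mem, Module.Basis.mem_span_iff_repr_mem]; rfl
    _ ↔ x ∈ span ℤ (range (Pi.basisFun ℝ ι)) := by
        refine ⟨fun h => ?_, mulVec_mem_span_basisFun _⟩
        rw [← (unitsIntToLinearEquiv u).apply_symm_apply x]
        exact mulVec_mem_span_basisFun _ h

theorem measurePreserving_unitsIntToLinearEquiv (u : (Matrix ι ι ℤ)ˣ) :
    MeasurePreserving (unitsIntToLinearEquiv u) volume volume := by
  have hdet : |((u : Matrix ι ι ℤ).map ((↑) : ℤ → ℝ)).det| = 1 := by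
    rw [← Int.cast_det, ← Int.cast_abs,
      Int.isUnit_iff_abs_eq.1 ((Matrix.isUnit_iff_isUnit_det _).1 u.isUnit), Int.cast_one]
  change MeasurePreserving (Matrix.toLin' ((u : Matrix ι ι ℤ).map ((↑) : ℤ → ℝ))) volume volume
  refine ⟨(LinearMap.continuous_on_pi _).measurable, ?_⟩
  rw [Real.map_matrix_volume_pi_eq_smul_volume_pi, abs_inv, hdet, inv_one, ENNReal.ofReal_one,
    one_smul]
  intro h; simp [h] at hdet

theorem setIntegral_unitCube_comp_affine {E : Type*} [NormedAddCommGroup E] [NormedSpace ℝ E]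
    {A : Matrix ι ι ℤ} (hA : IsUnit A) (c : ι → ℝ) {H : (ι → ℝ) → E}
    (hH : ∀ (n : ι → ℤ) (x : ι → ℝ), H (Int.cast ∘ n + x) = H x) :
    ∫ x in univ.pi fun _ => Icc (0 : ℝ) 1, H (c + A.map (↑) *ᵥ x) =
      ∫ x in univ.pi fun _ => Icc (0 : ℝ) 1, H x := by
  obtain ⟨u, rfl⟩ := hA
  set e := unitsIntToLinearEquiv u
  set b := Pi.basisFun ℝ ι
  set T : (ι → ℝ) → (ι → ℝ) := fun x => c + e x
  have hT : MeasurePreserving T volume volume :=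
    (measurePreserving_add_left volume c).comp (measurePreserving_unitsIntToLinearEquiv u)
  have hTemb : MeasurableEmbedding T := (measurableEmbedding_addLeft c).comp
    (LinearEquiv.toContinuousLinearEquiv e).toHomeomorph.measurableEmbedding
  have hcube : ZSpan.fundamentalDomain b =ᵐ[volume] univ.pi fun _ => Icc (0 : ℝ) 1 := by
    rw [ZSpan.fundamentalDomain_pi_basisFun]; exact Measure.pi_Ico_ae_eq_pi_Icc
  have : Countable (span ℤ (range b)).toAddSubgroup :=
    inferInstanceAs (Countable (span ℤ (range b)))
  have hFD := ZSpan.isAddFundamentalDomain' b volume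
  have hFD' : IsAddFundamentalDomain (span ℤ (range b)).toAddSubgroup
      (T '' ZSpan.fundamentalDomain b) volume := by
    have hFDe := ZSpan.isAddFundamentalDomain' (b.map e) volume
    rw [span_basisFun_map_unitsIntToLinearEquiv] at hFDe
    rw [show T = (c +ᵥ ·) ∘ e from rfl, image_comp, ZSpan.map_fundamentalDomain, image_vadd]
    exact hFDe.vadd_of_comm c
  calc ∫ x in univ.pi fun _ => Icc (0 : ℝ) 1, H (T x)
      = ∫ x in ZSpan.fundamentalDomain b, H (T x) := setIntegral_congr_set hcube.symm
    _ = ∫ y in T '' ZSpan.fundamentalDomain b, H y := (hT.setIntegral_image_emb hTemb H _).symm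
    _ = ∫ y in ZSpan.fundamentalDomain b, H y := hFD'.setIntegral_eq hFD fun g x => by
        obtain ⟨n, hn⟩ := mem_span_basisFun_iff.1 g.2
        rw [AddSubgroup.vadd_def, vadd_eq_add, ← hn, hH]
    _ = _ := setIntegral_congr_set hcube

end IntegerLattice

theorem mahlerMeasure_eq_of_norm_eq_comp_affine {d : ℕ} {f g : AddMonoidAlgebra ℤ (Fin d → ℤ)}
    (hf : f ≠ 0) (hg : g ≠ 0) {A : Matrix (Fin d) (Fin d) ℤ} (hA : IsUnit A) (c : Fin d → ℝ)
    (hfg : ∀ t : Fin d → ℝ, ‖lEval f (fun i => 𝐞 (t i))‖ =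
      ‖lEval g (fun i => 𝐞 ((c + A.map (↑) *ᵥ t) i))‖) :
    mahlerMeasure f = mahlerMeasure g := by
  simp only [mahlerMeasure, if_neg hf, if_neg hg, ← Real.coe_fourierChar, hfg]
  congr 1
  refine setIntegral_unitCube_comp_affine (H := fun t => Real.log ‖lEval g fun i => (𝐞 (t i) : ℂ)‖)
    hA c fun n x => ?_
  simp only [Pi.add_apply, Function.comp_apply, AddChar.map_add_eq_mul, Real.fourierChar_intCast,
    one_mul]

noncomputable def pretzelF : AddMonoidAlgebra ℤ (Fin 4 → ℤ) :=
  U 0 - U 0 * U 2 - U 0 * U 3 - U 1 * U 2 + U 2 * U 3 + U 0 * U 1 * U 2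

noncomputable def pretzelG : AddMonoidAlgebra ℤ (Fin 4 → ℤ) :=
  1 + U 0 + U 1 + U 2 + U 3 - Uinv 0 * Uinv 1 * U 2 * U 3

theorem lEval_pretzelF {s : Fin 4 → ℂ} (hs : ∀ i, s i ≠ 0) :
    lEval pretzelF s = s 0 - s 0 * s 2 - s 0 * s 3 - s 1 * s 2 + s 2 * s 3 + s 0 * s 1 * s 2 := by
  rw [← lEvalHom_apply s hs, pretzelF]
  simp only [map_add, map_sub, map_mul, lEvalHom_apply, lEval_U]

theorem lEval_pretzelG {s : Fin 4 → ℂ} (hs : ∀ i, s i ≠ 0) :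
    lEval pretzelG s = 1 + s 0 + s 1 + s 2 + s 3 - (s 0)⁻¹ * (s 1)⁻¹ * s 2 * s 3 := by
  rw [← lEvalHom_apply s hs, pretzelG]
  simp only [map_add, map_sub, map_mul, map_one, lEvalHom_apply, lEval_U, lEval_Uinv]

theorem pretzelF_ne_zero : pretzelF ≠ 0 :=
  ne_zero_of_lEval_ne_zero (s := fun _ => 2) <| by
    rw [lEval_pretzelF fun _ => two_ne_zero]
    norm_num

theorem pretzelG_ne_zero : pretzelG ≠ 0 :=
  ne_zero_of_lEval_ne_zero (s := fun _ => 1) <| by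
    rw [lEval_pretzelG fun _ => one_ne_zero]
    norm_num

theorem lEval_pretzelF_eq_mul_lEval_pretzelG {s : Fin 4 → ℂ} (hs : ∀ i, s i ≠ 0) :
    lEval pretzelF s = s 0 * lEval pretzelG ![-s 2, -s 3, s 1 * s 2, (s 0)⁻¹ * s 2 * s 3] := by
  have hv : ∀ i, ![-s 2, -s 3, s 1 * s 2, (s 0)⁻¹ * s 2 * s 3] i ≠ 0 := by
    intro i; fin_cases i <;> simp [hs]
  rw [lEval_pretzelF hs, lEval_pretzelG hv]
  have h0 := hs 0
  have h2 := hs 2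
  have h3 := hs 3
  simp only [Matrix.cons_val]
  field_simp
  ring

def pretzelMatrix : Matrix (Fin 4) (Fin 4) ℤ := !![0, 0, 1, 0; 0, 0, 0, 1; 0, 1, 1, 0; -1, 0, 1, 1]

noncomputable def pretzelShift : Fin 4 → ℝ := ![2⁻¹, 2⁻¹, 0, 0]

theorem isUnit_pretzelMatrix : IsUnit pretzelMatrix :=
  (Matrix.isUnit_iff_isUnit_det _).2 <| by
    rw [show pretzelMatrix.det = 1 by decide]
    exact isUnit_one

theorem norm_lEval_pretzelF (t : Fin 4 → ℝ) :
    ‖lEval pretzelF (fun i => 𝐞 (t i))‖ =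
      ‖lEval pretzelG (fun i => 𝐞 ((pretzelShift + pretzelMatrix.map (↑) *ᵥ t) i))‖ := by
  have hsubst : (fun i => (𝐞 ((pretzelShift + pretzelMatrix.map (↑) *ᵥ t) i) : ℂ)) =
      ![-(𝐞 (t 2) : ℂ), -𝐞 (t 3), 𝐞 (t 1) * 𝐞 (t 2), (𝐞 (t 0) : ℂ)⁻¹ * 𝐞 (t 2) * 𝐞 (t 3)] := by
    ext i
    fin_cases i <;>
      simp [pretzelShift, pretzelMatrix, mulVec, dotProduct, Fin.sum_univ_four,
        AddChar.map_add_eq_mul, AddChar.map_neg_eq_inv, Real.fourierChar_inv_two]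
  rw [hsubst, lEval_pretzelF_eq_mul_lEval_pretzelG fun i => Circle.coe_ne_zero _, norm_mul,
    Circle.norm_coe, one_mul]

/-- **Example 5.5 (pretzel link `l(2,−2,2,−2,2)`).**  The Mahler measure of
`u_1 − u_1u_3 − u_1u_4 − u_2u_3 + u_3u_4 + u_1u_2u_3` equals the Mahler measure of
`1 + v_1 + v_2 + v_3 + v_4 − v_1⁻¹v_2⁻¹v_3v_4`. -/
theorem mahler_pretzel_factor :
    mahlerMeasure ((U 0 - U 0 * U 2 - U 0 * U 3 - U 1 * U 2 + U 2 * U 3 + U 0 * U 1 * U 2 :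
        AddMonoidAlgebra ℤ (Fin 4 → ℤ))) =
    mahlerMeasure ((1 + U 0 + U 1 + U 2 + U 3 - Uinv 0 * Uinv 1 * U 2 * U 3 :
        AddMonoidAlgebra ℤ (Fin 4 → ℤ))) :=
  mahlerMeasure_eq_of_norm_eq_comp_affine pretzelF_ne_zero pretzelG_ne_zero isUnit_pretzelMatrix
    pretzelShift norm_lEval_pretzelF
end

section
/- The Mahler measure of the one-variable polynomial 1 − u − u^{11} + u^{12} − u^{13} − u^{23} + u^{24} equals the Mahler measure of Lehmer's polynomial L(u) = 1 + u − u³ − u⁴ − u⁵ − u⁶ − u⁷ + u⁹ + u^{10}. -/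
open MeasureTheory

/-! In one variable `mahlerMeasure` agrees with `Polynomial.mahlerMeasure` of the corresponding
complex polynomial. Over `ℂ[X]` one has
`(1 − u − u¹¹ + u¹² − u¹³ − u²³ + u²⁴)(u + 1)(u³ − 1)(u⁵ − 1) = L(u)(u − 1)(u⁷ + 1)(u¹⁵ − 1)`,
and every binomial `uⁿ − a` with `|a| = 1` has all its roots on the unit circle, hence Mahler
measure `1`. Multiplicativity of the Mahler measure finishes the proof. -/

open Polynomial (X C eval)
open scoped Polynomial

noncomputable def torusCharacter {d : ℕ} (s : Fin d → ℂˣ) : Multiplicative (Fin d → ℤ) →* ℂ where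
  toFun n := ∏ i, (s i : ℂ) ^ n.toAdd i
  map_one' := by simp
  map_mul' m n := by
    simp [zpow_add₀ (s _).ne_zero, Finset.prod_mul_distrib]

theorem lEval_eq_lift {d : ℕ} (f : AddMonoidAlgebra ℤ (Fin d → ℤ)) (s : Fin d → ℂˣ) :
    lEval f (fun i => s i) = AddMonoidAlgebra.lift ℤ ℂ (Fin d → ℤ) (torusCharacter s) f := by
  rw [AddMonoidAlgebra.lift_apply']
  rfl

theorem lift_torusCharacter_U {d : ℕ} (s : Fin d → ℂˣ) (i : Fin d) :
    AddMonoidAlgebra.lift ℤ ℂ (Fin d → ℤ) (torusCharacter s) (U i) = s i := by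
  simp [U, torusCharacter, Pi.single_apply]

theorem lEval_zero {d : ℕ} (s : Fin d → ℂ) : lEval 0 s = 0 := by
  rw [lEval, AddMonoidAlgebra.coeff_zero, Finsupp.sum_zero_index]

namespace Polynomial

theorem eq_zero_of_forall_units_eval_eq_zero {p : ℂ[X]} (h : ∀ z : ℂˣ, p.eval (z : ℂ) = 0) :
    p = 0 := by
  refine p.eq_zero_of_infinite_isRoot ((Set.finite_singleton 0).infinite_compl.mono ?_)
  intro z hz
  exact h (Units.mk0 z hz)

theorem mahlerMeasure_X_pow_sub_C {n : ℕ} (hn : n ≠ 0) {a : ℂ} (ha : ‖a‖ = 1) :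
    (X ^ n - C a).mahlerMeasure = 1 := by
  have hroot : ∀ z ∈ (X ^ n - C a).roots, ‖z‖ = 1 := by
    intro z hz
    have hzn : z ^ n = a := by
      have := (mem_roots (X_pow_sub_C_ne_zero (Nat.pos_of_ne_zero hn) a)).mp hz
      simpa [sub_eq_zero] using this
    rw [← pow_left_inj₀ (norm_nonneg z) zero_le_one hn, ← norm_pow, hzn, ha, one_pow]
  rw [mahlerMeasure_eq_leadingCoeff_mul_prod_roots, (monic_X_pow_sub_C a hn).leadingCoeff,
    norm_one, one_mul]
  refine Multiset.prod_eq_one fun x hx => ?_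
  obtain ⟨z, hz, rfl⟩ := Multiset.mem_map.mp hx
  rw [hroot z hz, max_self]

theorem mahlerMeasure_eq_of_mul_eq_mul {p q a b : ℂ[X]} (h : p * a = q * b)
    (ha : a.mahlerMeasure = 1) (hb : b.mahlerMeasure = 1) : p.mahlerMeasure = q.mahlerMeasure := by
  simpa [mahlerMeasure_mul, ha, hb] using congrArg mahlerMeasure h

end Polynomial

theorem setIntegral_pi_Icc_fin_one {E : Type*} [NormedAddCommGroup E] [NormedSpace ℝ E]
    (g : ℝ → E) {a b : ℝ} (hab : a ≤ b) :
    ∫ t in Set.pi Set.univ (fun _ : Fin 1 => Set.Icc a b), g (t 0) = ∫ x in a..b, g x := by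
  have hpre : (MeasurableEquiv.funUnique (Fin 1) ℝ).symm ⁻¹'
      Set.pi Set.univ (fun _ => Set.Icc a b) = Set.Icc a b := by
    rw [Set.pi_univ_Icc]
    exact (OrderIso.funUnique (Fin 1) ℝ).symm.preimage_Icc _ _
  rw [intervalIntegral.integral_of_le hab, ← integral_Icc_eq_integral_Ioc]
  refine (((volume_preserving_funUnique (Fin 1) ℝ).symm _).setIntegral_preimage_emb
      (MeasurableEquiv.measurableEmbedding _) (fun t => g (t 0)) _).symm.trans ?_
  rw [hpre]
  rfl

theorem integral_comp_exp_eq_circleAverage {E : Type*} [NormedAddCommGroup E] [NormedSpace ℝ E]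
    (G : ℂ → E) :
    ∫ x in (0:ℝ)..1, G (Complex.exp (2 * Real.pi * Complex.I * x)) =
      Real.circleAverage G 0 1 := by
  have h := intervalIntegral.integral_comp_mul_left (fun θ => G (circleMap 0 1 θ))
    (c := 2 * Real.pi) (a := 0) (b := 1) (by positivity)
  rw [mul_zero, mul_one] at h
  rw [Real.circleAverage_def, ← h]
  congr 1 with x
  simp only [circleMap_zero, Complex.ofReal_one, one_mul]
  push_cast; ring_nf

theorem mahlerMeasure_eq_mahlerMeasure_of_lEval_eq_eval {f : AddMonoidAlgebra ℤ (Fin 1 → ℤ)}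
    {p : ℂ[X]} (hp : p ≠ 0) (hfp : ∀ z : ℂˣ, lEval f (fun _ => z) = p.eval (z : ℂ)) :
    mahlerMeasure f = p.mahlerMeasure := by
  have hf : f ≠ 0 := by
    rintro rfl
    exact hp (Polynomial.eq_zero_of_forall_units_eval_eq_zero fun z => by
      rw [← hfp, lEval_zero])
  rw [mahlerMeasure, if_neg hf, Polynomial.mahlerMeasure, if_pos hp,
    Polynomial.logMahlerMeasure_def, ← integral_comp_exp_eq_circleAverage,
    ← setIntegral_pi_Icc_fin_one _ zero_le_one]
  congr 2 with t
  have ht : (fun i => Complex.exp (2 * Real.pi * Complex.I * t i)) =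
      fun _ => ((Units.mk0 _ (Complex.exp_ne_zero (2 * Real.pi * Complex.I * t 0)) : ℂˣ) : ℂ) := by
    ext i
    rw [Subsingleton.elim i 0, Units.val_mk0]
  rw [ht, hfp, Units.val_mk0]

noncomputable def linkPoly : ℂ[X] := 1 - X - X ^ 11 + X ^ 12 - X ^ 13 - X ^ 23 + X ^ 24

noncomputable def lehmerPoly : ℂ[X] :=
  1 + X - X ^ 3 - X ^ 4 - X ^ 5 - X ^ 6 - X ^ 7 + X ^ 9 + X ^ 10

theorem linkPoly_ne_zero : linkPoly ≠ 0 := fun h => by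
  have h2 := congrArg (eval 2) h
  norm_num [linkPoly] at h2

theorem lehmerPoly_ne_zero : lehmerPoly ≠ 0 := fun h => by
  have h2 := congrArg (eval 2) h
  norm_num [lehmerPoly] at h2

theorem linkPoly_mul_eq_lehmerPoly_mul :
    linkPoly * ((X ^ 1 - C (-1)) * (X ^ 3 - C 1) * (X ^ 5 - C 1)) =
      lehmerPoly * ((X ^ 1 - C 1) * (X ^ 7 - C (-1)) * (X ^ 15 - C 1)) := by
  simp only [linkPoly, lehmerPoly, map_neg, map_one]
  ring

theorem mahlerMeasure_linkPoly_eq_mahlerMeasure_lehmerPoly :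
    linkPoly.mahlerMeasure = lehmerPoly.mahlerMeasure := by
  refine Polynomial.mahlerMeasure_eq_of_mul_eq_mul linkPoly_mul_eq_lehmerPoly_mul ?_ ?_ <;>
    simp (disch := norm_num) only [Polynomial.mahlerMeasure_mul,
      Polynomial.mahlerMeasure_X_pow_sub_C, mul_one]

/-- **Example 5.1.**  The Mahler measure of
`1 − u − u¹¹ + u¹² − u¹³ − u²³ + u²⁴` (which is `Δ_{7²₁}(u, u¹¹)`) equals the Mahler
measure of Lehmer's polynomial `L(u) = 1 + u − u³ − u⁴ − u⁵ − u⁶ − u⁷ + u⁹ + u¹⁰`. -/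
theorem mahler_lehmer_from_link :
    mahlerMeasure ((1 - U 0 - (U 0)^11 + (U 0)^12 - (U 0)^13 - (U 0)^23 + (U 0)^24 :
        AddMonoidAlgebra ℤ (Fin 1 → ℤ))) =
    mahlerMeasure ((1 + U 0 - (U 0)^3 - (U 0)^4 - (U 0)^5 - (U 0)^6 - (U 0)^7 +
        (U 0)^9 + (U 0)^10 : AddMonoidAlgebra ℤ (Fin 1 → ℤ))) := by
  rw [mahlerMeasure_eq_mahlerMeasure_of_lEval_eq_eval linkPoly_ne_zero fun z => by
      simp [lEval_eq_lift, lift_torusCharacter_U, linkPoly],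
    mahlerMeasure_eq_mahlerMeasure_of_lEval_eq_eval lehmerPoly_ne_zero fun z => by
      simp [lEval_eq_lift, lift_torusCharacter_U, lehmerPoly]]
  exact mahlerMeasure_linkPoly_eq_mahlerMeasure_lehmerPoly
end
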